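/- arXiv:2411.07882 — 2 statements merged into one kernel-verified Lean document; each statement's English description precedes it below -/
import Mathlib

section
/- Let $g_0,\dots,g_N$ and $x_0,\dots,x_N$ be polynomials in $k[u_1,\dots,u_r]$ and $m \ge 1$. Suppose $\sum_{j=0}^N g_j \cdot D_I x_j = 0$ for every multi-index $I$ with $|I| \le m-1$. Then for every $k \in \{1,\dots,r\}$ and every multi-index $I$ with $|I| \le m-2$, one has $\sum_{j=0}^N (\partial_k g_j) \cdot D_I x_j = 0$. -/
open MvPolynomial Finset

/-- The multivariate Hasse derivative `D_I` on `k[u_1,…,u_r]`, defined on monomials by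
`D_I(u^J) = (∏ t, (J t).choose (I t)) · u^(J-I)`. -/
noncomputable def hasse {k : Type*} [CommRing k] {r : ℕ} (I : Fin r → ℕ)
    (p : MvPolynomial (Fin r) k) : MvPolynomial (Fin r) k :=
  (AddMonoidAlgebra.coeff p).sum fun J c =>
    MvPolynomial.monomial (J - Finsupp.equivFunOnFinite.symm I)
      (c * ((∏ t, (J t).choose (I t) : ℕ) : k))

lemma pderiv_hasse {k : Type*} [CommRing k] {r : ℕ} (t : Fin r) (I : Fin r → ℕ)
    (p : MvPolynomial (Fin r) k) :
    pderiv t (hasse I p)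
      = C ((I t + 1 : ℕ) : k) * hasse (fun s => if s = t then I s + 1 else I s) p := by
  unfold hasse
  rw [Finsupp.sum, Finsupp.sum, map_sum, Finset.mul_sum]
  refine Finset.sum_congr rfl fun J _ => ?_
  rw [pderiv_monomial, C_mul_monomial]
  have hexp : J - Finsupp.equivFunOnFinite.symm I - Finsupp.single t 1
      = J - Finsupp.equivFunOnFinite.symm (fun s => if s = t then I s + 1 else I s) := by
    rw [tsub_tsub]
    congr 1
    ext s
    by_cases h : s = t
    · simp [h]
    · simp only [Finsupp.add_apply, Finsupp.single_apply, if_neg h,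
        if_neg (fun hh : t = s => h hh.symm), add_zero]
      simp [h]
  have hcf : (∏ s, (J s).choose (I s)) * ((J - Finsupp.equivFunOnFinite.symm I) t)
      = (I t + 1) * ∏ s, (J s).choose (if s = t then I s + 1 else I s) := by
    have h1 := Finset.prod_eq_mul_prod_sdiff_singleton_of_mem (Finset.mem_univ t)
      (fun s => (J s).choose (I s))
    have h2 := Finset.prod_eq_mul_prod_sdiff_singleton_of_mem (Finset.mem_univ t)
      (fun s => (J s).choose (if s = t then I s + 1 else I s))
    have h3 : ∏ s ∈ Finset.univ \ {t}, (J s).choose (if s = t then I s + 1 else I s)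
        = ∏ s ∈ Finset.univ \ {t}, (J s).choose (I s) := by
      refine Finset.prod_congr rfl fun s hs => ?_
      simp only [Finset.mem_sdiff, Finset.mem_singleton] at hs
      simp [hs.2]
    have h4 : (J - Finsupp.equivFunOnFinite.symm I) t = J t - I t := by
      simp [Finsupp.tsub_apply]
    rw [h1, h2, h3, h4, if_pos rfl, mul_right_comm, ← Nat.choose_succ_right_eq]
    ring
  rw [hexp]
  congr 1
  rw [mul_assoc, ← Nat.cast_mul, hcf, Nat.cast_mul]
  ring

/-- If `∑_j g_j · D_I x_j = 0` for all `|I| ≤ m-1`, then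
`∑_j (∂_k g_j) · D_I x_j = 0` for all `|I| ≤ m-2` and all `k`. -/
theorem stmt3 {k : Type*} [Field k] {r N m : ℕ} (hm : 1 ≤ m)
    (g x : Fin (N + 1) → MvPolynomial (Fin r) k)
    (H : ∀ I : Fin r → ℕ, (∑ t, I t) + 1 ≤ m → ∑ j, g j * hasse I (x j) = 0) :
    ∀ (t : Fin r) (I : Fin r → ℕ), (∑ s, I s) + 2 ≤ m →
      ∑ j, MvPolynomial.pderiv t (g j) * hasse I (x j) = 0 := by
  intro t I hI
  have h1 : ∑ j, g j * hasse I (x j) = 0 := H I (by omega)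
  have hsum : (∑ s, (if s = t then I s + 1 else I s)) + 1 ≤ m := by
    have : ∑ s, (if s = t then I s + 1 else I s) = (∑ s, I s) + 1 := by
      have : ∀ s : Fin r, (if s = t then I s + 1 else I s) = I s + (if s = t then 1 else 0) := by
        intro s; by_cases h : s = t <;> simp [h]
      simp [this, Finset.sum_add_distrib]
    omega
  have h2 := H (fun s => if s = t then I s + 1 else I s) hsum
  have h3 := congrArg (pderiv t) h1
  rw [map_sum, map_zero] at h3
  simp only [pderiv_mul, pderiv_hasse, Finset.sum_add_distrib] at h3
  have h4 : ∑ j, g j * (C ((I t + 1 : ℕ) : k) * hasse (fun s => if s = t then I s + 1 else I s) (x j))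
      = C ((I t + 1 : ℕ) : k) * ∑ j, g j * hasse (fun s => if s = t then I s + 1 else I s) (x j) := by
    rw [Finset.mul_sum]; exact Finset.sum_congr rfl fun j _ => by ring
  rw [h4, h2, mul_zero, add_zero] at h3
  exact h3
end

section
/- For the rational normal scroll parameterization: let $0 < d_0 \le \cdots \le d_e$ and $2 \le m \le d_0$, and consider the map $(t, s_1, \dots, s_e) \mapsto (t^a)_{0 \le a \le d_0} \cup (s_i t^a)_{1 \le i \le e,\, 0 \le a \le d_i}$ into $k^{\sum_i (d_i + 1)}$. Then the $k(t, s_1,\dots,s_e)$-rank of the matrix of all Hasse derivatives of order $\le m$ of the coordinate functions equals $m(e+1) + 1$. -/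
open MvPolynomial Finset

lemma hasse_monomial {r : ℕ} (I : Fin r → ℕ) (J : Fin r →₀ ℕ) (c : ℚ) :
    hasse I (monomial J c) =
      monomial (J - Finsupp.equivFunOnFinite.symm I)
        (c * ((∏ t, (J t).choose (I t) : ℕ) : ℚ)) := by
  unfold hasse
  exact MvPolynomial.sum_monomial_eq (by simp)

lemma hasse_coe {r : ℕ} (I : Fin r →₀ ℕ) (J : Fin r →₀ ℕ) (c : ℚ) :
    hasse (⇑I) (monomial J c) =
      monomial (J - I) (c * ((∏ t, (J t).choose (I t) : ℕ) : ℚ)) := by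
  rw [hasse_monomial, Finsupp.equivFunOnFinite_symm_coe]

lemma hasse_vanish {r : ℕ} (I : Fin r → ℕ) (J : Fin r →₀ ℕ) (c : ℚ) (t0 : Fin r)
    (h : J t0 < I t0) : hasse I (monomial J c) = 0 := by
  rw [hasse_monomial, Finset.prod_eq_zero (mem_univ t0) (Nat.choose_eq_zero_of_lt h)]
  simp

lemma prod_pair_helper {r : ℕ} (f : Fin r → ℕ) (u v : Fin r) (huv : u ≠ v)
    (h : ∀ t, t ≠ u → t ≠ v → f t = 1) : ∏ t, f t = f u * f v := by
  rw [← Finset.prod_pair huv]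
  exact (Finset.prod_subset (Finset.subset_univ _)
    (by intro x _ hx; simp only [Finset.mem_insert, Finset.mem_singleton] at hx
        push_neg at hx; exact h x hx.1 hx.2)).symm

lemma prod_choose_single {r : ℕ} (u : Fin r) (b b' : ℕ) :
    ∏ t, ((Finsupp.single u b) t).choose ((Finsupp.single u b') t) = b.choose b' := by
  rw [Finset.prod_eq_single u (fun t _ ht => by simp [Finsupp.single_apply, Ne.symm ht])
    (fun h => absurd (mem_univ u) h)]
  simp

lemma prod_choose_diag {r : ℕ} (i : Fin (r+1)) (hi : i ≠ 0) (b b' : ℕ) :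
    ∏ t, ((Finsupp.single i 1 + Finsupp.single (0 : Fin (r+1)) b : Fin (r+1) →₀ ℕ) t).choose
      ((Finsupp.single (0 : Fin (r+1)) b' + Finsupp.single i 1 : Fin (r+1) →₀ ℕ) t) = b.choose b' := by
  rw [prod_pair_helper _ 0 i (Ne.symm hi)
    (fun t ht0 hti => by simp [Finsupp.single_apply, Ne.symm ht0, Ne.symm hti])]
  simp [Finsupp.single_apply, hi, Ne.symm hi]

noncomputable def scrollP (e : ℕ) (d : Fin (e+1) → ℕ) (σ : Σ i : Fin (e+1), Fin (d i + 1)) :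
    MvPolynomial (Fin (e+1)) ℚ :=
  (if σ.1 = 0 then 1 else X σ.1) * X 0 ^ (σ.2 : ℕ)

noncomputable def scrollV (e : ℕ) (d : Fin (e+1) → ℕ) (I : Fin (e+1) → ℕ)
    (σ : Σ i : Fin (e+1), Fin (d i + 1)) : FractionRing (MvPolynomial (Fin (e+1)) ℚ) :=
  algebraMap _ _ (hasse I (scrollP e d σ))

lemma scrollP_at0 {e : ℕ} {d : Fin (e+1) → ℕ} (a : Fin (d 0 + 1)) :
    scrollP e d ⟨0, a⟩ = monomial (Finsupp.single 0 (a : ℕ)) 1 := by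
  unfold scrollP
  rw [if_pos rfl, one_mul, X_pow_eq_monomial]

lemma scrollP_succ {e : ℕ} {d : Fin (e+1) → ℕ} (i : Fin e) (a : Fin (d i.succ + 1)) :
    scrollP e d ⟨i.succ, a⟩
      = monomial (Finsupp.single i.succ 1 + Finsupp.single 0 (a : ℕ)) 1 := by
  unfold scrollP
  rw [if_neg (Fin.succ_ne_zero i), X_pow_eq_monomial,
    show (X i.succ : MvPolynomial (Fin (e+1)) ℚ) = monomial (Finsupp.single i.succ 1) 1 from rfl,
    monomial_mul, one_mul]

lemma sub_diag {r : ℕ} (i : Fin (r+1)) (hi : i ≠ 0) (b b' : ℕ) :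
    (Finsupp.single i 1 + Finsupp.single (0 : Fin (r+1)) b)
      - (Finsupp.single (0 : Fin (r+1)) b' + Finsupp.single i 1)
      = Finsupp.single (0 : Fin (r+1)) (b - b') := by
  ext t
  rw [Finsupp.tsub_apply]
  rcases eq_or_ne t 0 with rfl | ht0
  · simp [Finsupp.single_apply, hi]
  · rcases eq_or_ne t i with rfl | hti
    · simp [Finsupp.single_apply, Ne.symm ht0]
    · simp [Finsupp.single_apply, Ne.symm ht0, Ne.symm hti]

lemma scrollV_ss {e : ℕ} {d : Fin (e+1) → ℕ} (b' b : ℕ) (hb : b < d 0 + 1) :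
    scrollV e d ⇑(Finsupp.single (0 : Fin (e+1)) b') ⟨0, ⟨b, hb⟩⟩ =
      algebraMap _ _ ((monomial (Finsupp.single 0 (b - b')) ((b.choose b' : ℚ))) : MvPolynomial (Fin (e+1)) ℚ) := by
  unfold scrollV
  rw [scrollP_at0, hasse_coe, prod_choose_single, one_mul, ← Finsupp.single_tsub]

lemma scrollV_inr_at0 {e : ℕ} {d : Fin (e+1) → ℕ} (j : Fin e) (b' b : ℕ) (hb : b < d 0 + 1) :
    scrollV e d ⇑(Finsupp.single (0 : Fin (e+1)) b' + Finsupp.single j.succ 1 : Fin (e+1) →₀ ℕ)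
      ⟨0, ⟨b, hb⟩⟩ = 0 := by
  unfold scrollV
  rw [scrollP_at0, hasse_vanish _ _ _ j.succ
    (by simp [Finsupp.single_apply, (Fin.succ_ne_zero j).symm, Fin.succ_ne_zero j]), map_zero]

lemma scrollV_diag {e : ℕ} {d : Fin (e+1) → ℕ} (i : Fin e) (b' b : ℕ) (hb : b < d i.succ + 1) :
    scrollV e d ⇑(Finsupp.single (0 : Fin (e+1)) b' + Finsupp.single i.succ 1 : Fin (e+1) →₀ ℕ) ⟨i.succ, ⟨b, hb⟩⟩ =
      algebraMap _ _ ((monomial (Finsupp.single 0 (b - b')) ((b.choose b' : ℚ))) : MvPolynomial (Fin (e+1)) ℚ) := by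
  unfold scrollV
  rw [scrollP_succ, hasse_coe, prod_choose_diag _ (Fin.succ_ne_zero i), one_mul,
    sub_diag _ (Fin.succ_ne_zero i)]

lemma scrollV_off {e : ℕ} {d : Fin (e+1) → ℕ} (i j : Fin e) (hij : j ≠ i) (b' b : ℕ)
    (hb : b < d i.succ + 1) :
    scrollV e d ⇑(Finsupp.single (0 : Fin (e+1)) b' + Finsupp.single j.succ 1 : Fin (e+1) →₀ ℕ) ⟨i.succ, ⟨b, hb⟩⟩ = 0 := by
  unfold scrollV
  rw [scrollP_succ, hasse_vanish _ _ _ j.succ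
    (by simp [Finsupp.single_apply, (Fin.succ_ne_zero j).symm, Fin.succ_ne_zero j,
      fun h => hij (Fin.succ_injective _ h).symm,
      show i.succ ≠ j.succ from fun h => hij (Fin.succ_injective _ h).symm]), map_zero]

lemma sum_coe_single {r : ℕ} (u : Fin (r+1)) (b : ℕ) :
    ∑ t, Finsupp.single u b t = b := by
  simp [Finsupp.single_apply, Finset.sum_ite_eq]

lemma sum_coe_pair {r : ℕ} (u v : Fin (r+1)) (b : ℕ) :
    ∑ t, (Finsupp.single u b + Finsupp.single v 1 : Fin (r+1) →₀ ℕ) t = b + 1 := by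
  simp [Finsupp.add_apply, Finset.sum_add_distrib, Finsupp.single_apply, Finset.sum_ite_eq]

lemma scrollV_bigS {e : ℕ} {d : Fin (e+1) → ℕ} (I : Fin (e+1) → ℕ)
    (hS : 2 ≤ ∑ t ∈ univ.erase (0 : Fin (e+1)), I t) : scrollV e d I = 0 := by
  funext σ
  obtain ⟨i, a⟩ := σ
  rw [Pi.zero_apply]
  unfold scrollV
  rcases Fin.eq_zero_or_eq_succ i with rfl | ⟨j, rfl⟩
  · obtain ⟨t0, ht0, hI0⟩ : ∃ t0 ∈ univ.erase (0 : Fin (e+1)), I t0 ≠ 0 :=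
      Finset.exists_ne_zero_of_sum_ne_zero (by omega)
    have ht0' : t0 ≠ 0 := (Finset.mem_erase.1 ht0).1
    rw [scrollP_at0, hasse_vanish _ _ _ t0
      (by simp [Finsupp.single_apply, Ne.symm ht0']; omega), map_zero]
  · have hex : ∃ t0 ∈ univ.erase (0 : Fin (e+1)),
        ((Finsupp.single j.succ 1 + Finsupp.single (0 : Fin (e+1)) (a : ℕ)
          : Fin (e+1) →₀ ℕ)) t0 < I t0 := by
      by_contra hcon
      push_neg at hcon
      have hle : ∑ t ∈ univ.erase (0 : Fin (e+1)), I t ≤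
          ∑ t ∈ univ.erase (0 : Fin (e+1)),
            ((Finsupp.single j.succ 1 + Finsupp.single (0 : Fin (e+1)) (a : ℕ)
              : Fin (e+1) →₀ ℕ) t) := Finset.sum_le_sum hcon
      have hone : ∑ t ∈ univ.erase (0 : Fin (e+1)),
          ((Finsupp.single j.succ 1 + Finsupp.single (0 : Fin (e+1)) (a : ℕ)
            : Fin (e+1) →₀ ℕ) t) = 1 := by
        simp [Finsupp.add_apply, Finset.sum_add_distrib, Finsupp.single_apply,
          Finset.sum_ite_eq, Finset.mem_erase, Fin.succ_ne_zero j]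
      omega
    obtain ⟨t0, _, hlt⟩ := hex
    rw [scrollP_succ, hasse_vanish _ _ _ t0 hlt, map_zero]

noncomputable def scrollW (e m : ℕ) (d : Fin (e+1) → ℕ) :
    (Fin (m+1) ⊕ Fin e × Fin m) →
      (Σ i : Fin (e+1), Fin (d i + 1)) → FractionRing (MvPolynomial (Fin (e+1)) ℚ)
  | Sum.inl b => scrollV e d ⇑(Finsupp.single (0 : Fin (e+1)) (b : ℕ))
  | Sum.inr p => scrollV e d
      ⇑(Finsupp.single (0 : Fin (e+1)) ((p.2 : ℕ)) + Finsupp.single p.1.succ 1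
        : Fin (e+1) →₀ ℕ)

lemma scrollW_indep (e m : ℕ) (d : Fin (e+1) → ℕ) (hd : ∀ i, m ≤ d i) :
    LinearIndependent (FractionRing (MvPolynomial (Fin (e+1)) ℚ)) (scrollW e m d) := by
  rw [Fintype.linearIndependent_iff]
  intro c hc
  have hcσ : ∀ σ, ∑ t, c t * scrollW e m d t σ = 0 := by
    intro σ
    calc ∑ t, c t * scrollW e m d t σ = (∑ t, c t • scrollW e m d t) σ := by
          rw [Finset.sum_apply]; rfl
      _ = 0 := by rw [hc]; rfl
  have hz : ∀ b b' : ℕ, b < b' →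
      (algebraMap (MvPolynomial (Fin (e+1)) ℚ) (FractionRing (MvPolynomial (Fin (e+1)) ℚ))
        ((monomial (Finsupp.single 0 (b - b')) ((b.choose b' : ℚ)))) = 0) := by
    intro b b' h
    rw [Nat.choose_eq_zero_of_lt h]
    norm_num
  have hone : ∀ b : ℕ,
      (algebraMap (MvPolynomial (Fin (e+1)) ℚ) (FractionRing (MvPolynomial (Fin (e+1)) ℚ))
        ((monomial (Finsupp.single (0 : Fin (e+1)) (b - b)) ((b.choose b : ℚ)))) = 1) := by
    intro b
    simp [Nat.sub_self, Nat.choose_self]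
  have h0 : ∀ (b : ℕ) (hb : b < m + 1), c (Sum.inl ⟨b, hb⟩) = 0 := by
    intro b
    induction b using Nat.strong_induction_on with
    | _ b IH =>
      intro hb
      have hbd : b < d 0 + 1 := by have := hd 0; omega
      have h := hcσ ⟨0, ⟨b, hbd⟩⟩
      rw [Fintype.sum_sum_type] at h
      have h2 : ∑ p : Fin e × Fin m, c (Sum.inr p) * scrollW e m d (Sum.inr p) ⟨0, ⟨b, hbd⟩⟩ = 0 :=
        Finset.sum_eq_zero fun p _ => by
          rw [show scrollW e m d (Sum.inr p) = scrollV e d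
            ⇑(Finsupp.single (0 : Fin (e+1)) ((p.2 : ℕ)) + Finsupp.single p.1.succ 1
              : Fin (e+1) →₀ ℕ) from rfl, scrollV_inr_at0, mul_zero]
      have h1 : ∑ b' : Fin (m+1), c (Sum.inl b') * scrollW e m d (Sum.inl b') ⟨0, ⟨b, hbd⟩⟩
          = c (Sum.inl ⟨b, hb⟩) := by
        rw [Finset.sum_eq_single ⟨b, hb⟩]
        · rw [show scrollW e m d (Sum.inl ⟨b, hb⟩) = scrollV e d
            ⇑(Finsupp.single (0 : Fin (e+1)) b) from rfl, scrollV_ss, hone, mul_one]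
        · intro b' _ hne
          rcases Nat.lt_or_ge (b' : ℕ) b with hlt | hge
          · have := IH (b' : ℕ) hlt b'.isLt
            simp only [Fin.eta] at this
            rw [this, zero_mul]
          · have hblt : b < (b' : ℕ) := by
              rcases Nat.lt_or_ge b (b' : ℕ) with h' | h'
              · exact h'
              · exact absurd (Fin.ext (le_antisymm h' hge)) hne
            rw [show scrollW e m d (Sum.inl b') = scrollV e d
              ⇑(Finsupp.single (0 : Fin (e+1)) (b' : ℕ)) from rfl, scrollV_ss,
              hz b _ hblt, mul_zero]
        · exact fun h => absurd (mem_univ _) h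
      rw [h1, h2, add_zero] at h
      exact h
  have h0' : ∀ b : Fin (m+1), c (Sum.inl b) = 0 := fun b => by
    have := h0 (b : ℕ) b.isLt
    simpa only [Fin.eta] using this
  have hr : ∀ (i : Fin e) (b : ℕ) (hb : b < m), c (Sum.inr (i, ⟨b, hb⟩)) = 0 := by
    intro i b
    induction b using Nat.strong_induction_on with
    | _ b IH =>
      intro hb
      have hbd : b < d i.succ + 1 := by have := hd i.succ; omega
      have h := hcσ ⟨i.succ, ⟨b, hbd⟩⟩
      rw [Fintype.sum_sum_type] at h
      have h1 : ∑ b' : Fin (m+1), c (Sum.inl b') * scrollW e m d (Sum.inl b') ⟨i.succ, ⟨b, hbd⟩⟩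
          = 0 := Finset.sum_eq_zero fun b' _ => by rw [h0' b', zero_mul]
      have h2 : ∑ p : Fin e × Fin m, c (Sum.inr p) * scrollW e m d (Sum.inr p) ⟨i.succ, ⟨b, hbd⟩⟩
          = c (Sum.inr (i, ⟨b, hb⟩)) := by
        rw [Finset.sum_eq_single (i, ⟨b, hb⟩)]
        · rw [show scrollW e m d (Sum.inr (i, ⟨b, hb⟩)) = scrollV e d
            ⇑(Finsupp.single (0 : Fin (e+1)) b + Finsupp.single i.succ 1
              : Fin (e+1) →₀ ℕ) from rfl, scrollV_diag, hone, mul_one]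
        · rintro ⟨j, b'⟩ _ hne
          rcases eq_or_ne j i with rfl | hji
          · have hbne : (b' : ℕ) ≠ b := by
              intro hh
              exact hne (by rw [show b' = ⟨b, hb⟩ from Fin.ext hh])
            rcases Nat.lt_or_ge (b' : ℕ) b with hlt | hge
            · have := IH (b' : ℕ) hlt b'.isLt
              simp only [Fin.eta] at this
              rw [this, zero_mul]
            · have hblt : b < (b' : ℕ) := by omega
              rw [show scrollW e m d (Sum.inr (j, b')) = scrollV e d
                ⇑(Finsupp.single (0 : Fin (e+1)) (b' : ℕ) + Finsupp.single j.succ 1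
                  : Fin (e+1) →₀ ℕ) from rfl, scrollV_diag, hz b _ hblt, mul_zero]
          · rw [show scrollW e m d (Sum.inr (j, b')) = scrollV e d
              ⇑(Finsupp.single (0 : Fin (e+1)) (b' : ℕ) + Finsupp.single j.succ 1
                : Fin (e+1) →₀ ℕ) from rfl, scrollV_off i j hji, mul_zero]
        · exact fun h => absurd (mem_univ _) h
      rw [h1, h2, zero_add] at h
      exact h
  rintro (b | ⟨i, b⟩)
  · exact h0' b
  · have := hr i (b : ℕ) b.isLt
    simpa only [Fin.eta] using this

/-- For the rational normal scroll with `0 < d₀ ≤ ⋯ ≤ d_e` and `2 ≤ m ≤ d₀`, parameterized by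
the monomials `t^a` (`0 ≤ a ≤ d₀`) and `s_i t^a` (`1 ≤ i ≤ e`, `0 ≤ a ≤ d_i`) — here the
variable `X 0` is `t` and `X i` (`i ≥ 1`) is `s_i` — the rank over the function field
`k(t,s_1,…,s_e)` of the matrix of all Hasse derivatives of order `≤ m` of the coordinate
functions equals `m(e+1) + 1`. -/
theorem stmt18 (e m : ℕ) (d : Fin (e + 1) → ℕ) (hmono : Monotone d)
    (hd0 : 0 < d 0) (hm2 : 2 ≤ m) (hmd : m ≤ d 0) :
    Module.finrank (FractionRing (MvPolynomial (Fin (e + 1)) ℚ))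
      (Submodule.span (FractionRing (MvPolynomial (Fin (e + 1)) ℚ))
        (Set.range fun I : {I : Fin (e + 1) → ℕ // ∑ t, I t ≤ m} =>
          fun σ : Σ i : Fin (e + 1), Fin (d i + 1) =>
            algebraMap (MvPolynomial (Fin (e + 1)) ℚ)
              (FractionRing (MvPolynomial (Fin (e + 1)) ℚ))
              (hasse I.1 ((if σ.1 = 0 then 1 else MvPolynomial.X σ.1)
                * MvPolynomial.X 0 ^ (σ.2 : ℕ)))))
      = m * (e + 1) + 1 := by
  classical
  have hd : ∀ i : Fin (e+1), m ≤ d i := fun i => le_trans hmd (hmono (Fin.zero_le i))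
  have hgoal : (fun I : {I : Fin (e + 1) → ℕ // ∑ t, I t ≤ m} =>
      fun σ : Σ i : Fin (e + 1), Fin (d i + 1) =>
        algebraMap (MvPolynomial (Fin (e + 1)) ℚ)
          (FractionRing (MvPolynomial (Fin (e + 1)) ℚ))
          (hasse I.1 ((if σ.1 = 0 then 1 else MvPolynomial.X σ.1)
            * MvPolynomial.X 0 ^ (σ.2 : ℕ))))
      = fun I : {I : Fin (e + 1) → ℕ // ∑ t, I t ≤ m} => scrollV e d I.1 := rfl
  rw [hgoal]
  have hspan : Submodule.span (FractionRing (MvPolynomial (Fin (e+1)) ℚ))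
      (Set.range fun I : {I : Fin (e + 1) → ℕ // ∑ t, I t ≤ m} => scrollV e d I.1)
      = Submodule.span (FractionRing (MvPolynomial (Fin (e+1)) ℚ))
        (Set.range (scrollW e m d)) := by
    apply le_antisymm
    · rw [Submodule.span_le]
      rintro x ⟨⟨I, hI⟩, rfl⟩
      show scrollV e d I ∈ _
      have hsum : ∑ t ∈ univ.erase (0 : Fin (e+1)), I t + I 0 = ∑ t, I t :=
        Finset.sum_erase_add _ _ (mem_univ 0)
      by_cases hS0 : ∑ t ∈ univ.erase (0 : Fin (e+1)), I t = 0
      · have hI0 : ∀ t, t ≠ 0 → I t = 0 := fun t ht =>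
          (Finset.sum_eq_zero_iff.1 hS0) t (Finset.mem_erase.2 ⟨ht, mem_univ t⟩)
        have hIeq : I = ⇑(Finsupp.single (0 : Fin (e+1)) (I 0)) := funext fun t => by
          rcases eq_or_ne t 0 with rfl | ht
          · simp
          · simp [Finsupp.single_apply, Ne.symm ht, hI0 t ht]
        have hb : I 0 < m + 1 := by omega
        rw [hIeq]
        exact Submodule.subset_span ⟨Sum.inl ⟨I 0, hb⟩, rfl⟩
      · by_cases hS1 : ∑ t ∈ univ.erase (0 : Fin (e+1)), I t = 1
        · obtain ⟨j, hjmem, hjne⟩ :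
              ∃ j ∈ univ.erase (0 : Fin (e+1)), I j ≠ 0 :=
            Finset.exists_ne_zero_of_sum_ne_zero (by omega)
          have hj0 : j ≠ 0 := (Finset.mem_erase.1 hjmem).1
          have hadd := Finset.add_sum_erase _ I hjmem
          have h1j : 1 ≤ I j := Nat.one_le_iff_ne_zero.2 hjne
          have hr0 : ∑ t ∈ (univ.erase (0 : Fin (e+1))).erase j, I t = 0 := by omega
          have hIj : I j = 1 := by omega
          have hrest : ∀ t, t ≠ 0 → t ≠ j → I t = 0 := fun t ht0 htj =>
            (Finset.sum_eq_zero_iff.1 hr0) t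
              (Finset.mem_erase.2 ⟨htj, Finset.mem_erase.2 ⟨ht0, mem_univ t⟩⟩)
          obtain ⟨i, rfl⟩ := Fin.exists_succ_eq.2 hj0
          have hIeq : I = ⇑(Finsupp.single (0 : Fin (e+1)) (I 0) + Finsupp.single i.succ 1
              : Fin (e+1) →₀ ℕ) := funext fun t => by
            rcases eq_or_ne t 0 with rfl | ht
            · simp [Finsupp.single_apply, Fin.succ_ne_zero i]
            · rcases eq_or_ne t i.succ with rfl | ht2
              · simp [Finsupp.single_apply, Ne.symm ht, hIj]
              · simp [Finsupp.single_apply, Ne.symm ht, Ne.symm ht2, hrest t ht ht2]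
          have hb : I 0 < m := by omega
          rw [hIeq]
          exact Submodule.subset_span ⟨Sum.inr (i, ⟨I 0, hb⟩), rfl⟩
        · have h2 : 2 ≤ ∑ t ∈ univ.erase (0 : Fin (e+1)), I t := by omega
          rw [scrollV_bigS I h2]
          exact Submodule.zero_mem _
    · apply Submodule.span_mono
      rintro x ⟨t, rfl⟩
      rcases t with b | ⟨i, b⟩
      · refine ⟨⟨⇑(Finsupp.single (0 : Fin (e+1)) (b : ℕ)), ?_⟩, rfl⟩
        rw [sum_coe_single]
        have := b.isLt
        omega
      · refine ⟨⟨⇑(Finsupp.single (0 : Fin (e+1)) (b : ℕ) + Finsupp.single i.succ 1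
            : Fin (e+1) →₀ ℕ), ?_⟩, rfl⟩
        rw [sum_coe_pair]
        have := b.isLt
        omega
  rw [hspan, finrank_span_eq_card (scrollW_indep e m d hd)]
  simp only [Fintype.card_sum, Fintype.card_prod, Fintype.card_fin]
  ring
end
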